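/- arXiv:2108.01558 — 4 statements merged into one kernel-verified Lean document; each statement's English description precedes it below -/
import Mathlib

section
/- Let τ_0, ..., τ_n be distinct reals and let L_{j,n}(x) = Π_{m ≠ j} (x - τ_m)/(τ_j - τ_m) be the Lagrange basis polynomials. For i ≠ k (with 0 ≤ i, k ≤ n), the Lagrange basis polynomial on the node set with τ_k removed satisfies L_{i,n-1}(x) = L_{i,n}(x) - (w_{n,i}/w_{n,k}) * L_{k,n}(x), where w_{n,j} = Π_{m ≠ j} 1/(τ_j - τ_m) are the barycentric weights. -/
/-- Lagrange basis polynomial of degree `N` associated with node `τ j`, over the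
nodes `τ 0, …, τ N`. -/
noncomputable def lag (τ : ℕ → ℝ) (N j : ℕ) (x : ℝ) : ℝ :=
  ∏ r ∈ (Finset.range (N + 1)).erase j, (x - τ r) / (τ j - τ r)

/-- Barycentric weight `w_{N,j}`. -/
noncomputable def lagWeight (τ : ℕ → ℝ) (N j : ℕ) : ℝ :=
  ∏ r ∈ (Finset.range (N + 1)).erase j, 1 / (τ j - τ r)

/-!
Both `L_{i,n}` and `(w_{n,i}/w_{n,k}) L_{k,n}` equal `w_{n,i}` times the nodal polynomial of the
nodes other than `τ_i`, resp. `τ_k`. These two nodal polynomials share the factor `P` over the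
nodes other than `τ_i, τ_k`, so their difference is `((x - τ_k) - (x - τ_i)) P = (τ_i - τ_k) P`,
and `w_{n,i} (τ_i - τ_k)` is the barycentric weight of `τ_i` once `τ_k` is removed.
-/

open Polynomial Finset

namespace Lagrange

variable {F ι : Type*} [Field F] [DecidableEq ι] {s : Finset ι} {v : ι → F} {i k : ι}

theorem basis_eq_C_nodalWeight_mul_nodal_erase (s : Finset ι) (v : ι → F) (i : ι) :
    Lagrange.basis s v i = C (nodalWeight s v i) * nodal (s.erase i) v := by
  rw [Lagrange.basis, nodalWeight, nodal, map_prod, ← prod_mul_distrib]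
  rfl

theorem eval_basis (s : Finset ι) (v : ι → F) (i : ι) (x : F) :
    (Lagrange.basis s v i).eval x = ∏ j ∈ s.erase i, (x - v j) / (v i - v j) := by
  simp [Lagrange.basis, basisDivisor, eval_prod, div_eq_inv_mul]

theorem nodalWeight_eq_inv_mul_nodalWeight_erase (hk : k ∈ s) (hik : i ≠ k) :
    nodalWeight s v i = (v i - v k)⁻¹ * nodalWeight (s.erase k) v i := by
  rw [nodalWeight, nodalWeight, ← mul_prod_erase _ _ (mem_erase.2 ⟨hik.symm, hk⟩),
    erase_right_comm]

theorem basis_erase (hvs : Set.InjOn v s) (hi : i ∈ s) (hk : k ∈ s) (hik : i ≠ k) :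
    Lagrange.basis (s.erase k) v i =
      Lagrange.basis s v i - C (nodalWeight s v i / nodalWeight s v k) * Lagrange.basis s v k := by
  have hwk := nodalWeight_ne_zero hvs hk
  have hvik : v i - v k ≠ 0 := sub_ne_zero.2 (hvs.ne hi hk hik)
  have hni : nodal (s.erase i) v = (X - C (v k)) * nodal ((s.erase k).erase i) v := by
    rw [nodal_eq_mul_nodal_erase (mem_erase.2 ⟨hik.symm, hk⟩), erase_right_comm]
  have hnk : nodal (s.erase k) v = (X - C (v i)) * nodal ((s.erase k).erase i) v :=
    nodal_eq_mul_nodal_erase (mem_erase.2 ⟨hik, hi⟩)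
  have hw : C (nodalWeight s v i / nodalWeight s v k) * C (nodalWeight s v k) =
      C (nodalWeight s v i) := by
    rw [← C_mul, div_mul_cancel₀ _ hwk]
  rw [basis_eq_C_nodalWeight_mul_nodal_erase, basis_eq_C_nodalWeight_mul_nodal_erase,
    basis_eq_C_nodalWeight_mul_nodal_erase, hni, hnk, ← mul_assoc (C (_ / _)), hw, ← mul_sub,
    ← sub_mul, sub_sub_sub_cancel_left, ← C_sub, ← mul_assoc, ← C_mul,
    nodalWeight_eq_inv_mul_nodalWeight_erase hk hik, mul_comm _ (v i - v k),
    mul_inv_cancel_left₀ hvik]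

end Lagrange

theorem lag_eq_eval_basis (τ : ℕ → ℝ) (N j : ℕ) (x : ℝ) :
    lag τ N j x = (Lagrange.basis (range (N + 1)) τ j).eval x :=
  (Lagrange.eval_basis _ _ _ _).symm

theorem lagWeight_eq_nodalWeight (τ : ℕ → ℝ) (N j : ℕ) :
    lagWeight τ N j = Lagrange.nodalWeight (range (N + 1)) τ j := by
  simp only [lagWeight, Lagrange.nodalWeight, one_div]

theorem lagrange_node_removal (n : ℕ) (τ : ℕ → ℝ)
    (hτ : ∀ p q, p ≤ n → q ≤ n → p ≠ q → τ p ≠ τ q)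
    (i k : ℕ) (hi : i ≤ n) (hk : k ≤ n) (hik : i ≠ k) (x : ℝ) :
    (∏ r ∈ (((Finset.range (n + 1)).erase k).erase i), (x - τ r) / (τ i - τ r)) =
      lag τ n i x - lagWeight τ n i / lagWeight τ n k * lag τ n k x := by
  have hinj : Set.InjOn τ (range (n + 1)) := fun p hp q hq hpq => by
    by_contra hne
    exact hτ p q (by simpa [Nat.lt_succ_iff] using hp) (by simpa [Nat.lt_succ_iff] using hq) hne hpq
  have hi' : i ∈ range (n + 1) := mem_range.2 (Nat.lt_succ_of_le hi)
  have hk' : k ∈ range (n + 1) := mem_range.2 (Nat.lt_succ_of_le hk)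
  rw [← Lagrange.eval_basis, Lagrange.basis_erase hinj hi' hk' hik, lag_eq_eval_basis,
    lag_eq_eval_basis, lagWeight_eq_nodalWeight, lagWeight_eq_nodalWeight, eval_sub, eval_mul,
    eval_C]
end

section
/- Let {φ_j} be a degree-graded sequence satisfying x φ_j = α_j φ_{j+1} + β_j φ_j + γ_j φ_{j-1} with α_j ≠ 0, φ_{-1}=0, φ_0=1. Then for all k ≥ 0: φ_2(x) φ_k(x) = (1/(α_0 α_1)) * [ α_{k+1} α_k φ_{k+2}(x) + α_k (β_{k+1} + β_k - β_1 - β_0) φ_{k+1}(x) + ((β_k - β_0)(β_k - β_1) - γ_1 α_0 + γ_k α_{k-1} + γ_{k+1} α_k) φ_k(x) + γ_k (β_k + β_{k-1} - β_1 - β_0) φ_{k-1}(x) + γ_k γ_{k-1} φ_{k-2}(x) ]. -/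
open Polynomial

/-!
Solving the recurrence at `j = 0, 1` gives `α₀ α₁ φ₂ = (X - β₀)(X - β₁) - γ₁ α₀`, so it suffices
to expand `(X - a)(X - b) φ_k` in the basis `φ`, which follows by applying the recurrence twice.
-/

namespace DegreeGraded

variable {φ : ℕ → Polynomial ℝ} {α β γ : ℕ → ℝ}

/-- At `k = 0` the index `k - 1` truncates to `0`, so the recurrence at `k - 1` is unavailable;
the factor `γ 0 = 0` makes the statement hold there anyway. -/
theorem C_gamma_mul_X_mul_pred (hγ0 : γ 0 = 0)
    (hrec : ∀ j, X * φ j = C (α j) * φ (j + 1) + C (β j) * φ j + C (γ j) * φ (j - 1)) (k : ℕ) :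
    C (γ k) * (X * φ (k - 1)) =
      C (γ k) * (C (α (k - 1)) * φ k + C (β (k - 1)) * φ (k - 1) + C (γ (k - 1)) * φ (k - 2)) := by
  cases k with
  | zero => simp [hγ0]
  | succ k => simpa [Nat.sub_sub] using congrArg (C (γ (k + 1)) * ·) (hrec k)

theorem X_sub_C_mul_X_sub_C_mul (hγ0 : γ 0 = 0)
    (hrec : ∀ j, X * φ j = C (α j) * φ (j + 1) + C (β j) * φ j + C (γ j) * φ (j - 1))
    (a b : ℝ) (k : ℕ) :
    (X - C a) * (X - C b) * φ k =
      C (α (k + 1) * α k) * φ (k + 2) +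
        C (α k * (β (k + 1) + β k - a - b)) * φ (k + 1) +
        C ((β k - a) * (β k - b) + γ k * α (k - 1) + γ (k + 1) * α k) * φ k +
        C (γ k * (β k + β (k - 1) - a - b)) * φ (k - 1) +
        C (γ k * γ (k - 1)) * φ (k - 2) := by
  have hnext := hrec (k + 1)
  rw [Nat.add_sub_cancel] at hnext
  simp only [map_mul, map_add, map_sub]
  linear_combination (X + C (β k) - C a - C b) * hrec k + C (α k) * hnext +
    C_gamma_mul_X_mul_pred hγ0 hrec k

theorem C_mul_phi_two (hφ0 : φ 0 = 1) (hγ0 : γ 0 = 0)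
    (hrec : ∀ j, X * φ j = C (α j) * φ (j + 1) + C (β j) * φ j + C (γ j) * φ (j - 1)) :
    C (α 0 * α 1) * φ 2 = (X - C (β 0)) * (X - C (β 1)) - C (γ 1 * α 0) := by
  have h0 := hrec 0
  have h1 := hrec 1
  simp only [hφ0, hγ0, Nat.sub_self, map_zero, add_zero, mul_one] at h0 h1
  simp only [map_mul]
  linear_combination (C (β 1) - X) * h0 - C (α 0) * h1

end DegreeGraded

theorem degree_graded_phi2_mul_general (φ : ℕ → Polynomial ℝ) (α β γ : ℕ → ℝ)
    (hφ0 : φ 0 = 1)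
    (hα : ∀ j, α j ≠ 0) (hγ0 : γ 0 = 0)
    (hrec : ∀ j, X * φ j = C (α j) * φ (j + 1) + C (β j) * φ j + C (γ j) * φ (j - 1)) :
    ∀ k, φ 2 * φ k =
      C (1 / (α 0 * α 1)) *
        (C (α (k + 1) * α k) * φ (k + 2) +
          C (α k * (β (k + 1) + β k - β 1 - β 0)) * φ (k + 1) +
          C ((β k - β 0) * (β k - β 1) - γ 1 * α 0 + γ k * α (k - 1) + γ (k + 1) * α k) * φ k +
          C (γ k * (β k + β (k - 1) - β 1 - β 0)) * φ (k - 1) +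
          C (γ k * γ (k - 1)) * φ (k - 2)) := by
  intro k
  have hunit : C (1 / (α 0 * α 1)) * C (α 0 * α 1) = 1 := by
    rw [← C_mul, one_div_mul_cancel (mul_ne_zero (hα 0) (hα 1)), C_1]
  have hφ2 : φ 2 = C (1 / (α 0 * α 1)) * ((X - C (β 0)) * (X - C (β 1)) - C (γ 1 * α 0)) := by
    rw [← DegreeGraded.C_mul_phi_two hφ0 hγ0 hrec, ← mul_assoc, hunit, one_mul]
  rw [hφ2, mul_assoc]
  congr 1
  have hexp := DegreeGraded.X_sub_C_mul_X_sub_C_mul hγ0 hrec (β 0) (β 1) k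
  simp only [map_mul, map_add, map_sub] at hexp ⊢
  linear_combination hexp

theorem degree_graded_phi2_mul (φ : ℕ → Polynomial ℝ) (α β γ : ℕ → ℝ)
    (hdeg : ∀ j, (φ j).natDegree = j) (hφ0 : φ 0 = 1)
    (hα : ∀ j, α j ≠ 0) (hγ0 : γ 0 = 0)
    (hrec : ∀ j, X * φ j = C (α j) * φ (j + 1) + C (β j) * φ j + C (γ j) * φ (j - 1)) :
    ∀ k, φ 2 * φ k =
      C (1 / (α 0 * α 1)) *
        (C (α (k + 1) * α k) * φ (k + 2) +
          C (α k * (β (k + 1) + β k - β 1 - β 0)) * φ (k + 1) +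
          C ((β k - β 0) * (β k - β 1) - γ 1 * α 0 + γ k * α (k - 1) + γ (k + 1) * α k) * φ k +
          C (γ k * (β k + β (k - 1) - β 1 - β 0)) * φ (k - 1) +
          C (γ k * γ (k - 1)) * φ (k - 2)) :=
  degree_graded_phi2_mul_general φ α β γ hφ0 hα hγ0 hrec
end

section
/- Let {φ_j} be a degree-graded family as above and define the linearization coefficients c_{j,k,i} by φ_j φ_k = Σ_i c_{j,k,i} φ_i. Then they satisfy the recursion: c_{j,k,i} = (1/α_{j-1}) * ( α_{i-1} c_{j-1,k,i-1} + (β_i - β_{j-1}) c_{j-1,k,i} + γ_{i+1} c_{j-1,k,i+1} - γ_{j-1} c_{j-2,k,i} ) for j ≥ 2, with c_{0,k,i} = δ_{i,k} and c_{1,k,i} determined by φ_1 φ_k = (1/α_0)(α_k φ_{k+1} + (β_k - β_0) φ_k + γ_k φ_{k-1}). -/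
/-!
Multiplying the recurrence at `j - 1` by `φ k` gives
`α (j-1) φ j φ k = (X - β (j-1)) φ (j-1) φ k - γ (j-1) φ (j-2) φ k`.
Expanding every product in the basis, and letting `X` act on the expansion of `φ (j-1) φ k`
through the recurrence, yields two expansions of the same polynomial; polynomials of distinct
degrees are linearly independent, so the coefficients agree.
-/

open Polynomial Finset

namespace Polynomial

variable {R : Type*} [CommRing R] {φ : ℕ → R[X]}

theorem linearIndependent_of_natDegree_eq [IsDomain R] (hdeg : ∀ j, (φ j).natDegree = j)
    (hφ0 : φ 0 ≠ 0) : LinearIndependent R φ := by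
  refine Sequence.linearIndependent ⟨φ, fun j => ?_⟩
  have hne : φ j ≠ 0 := by
    rcases j with _ | j
    · exact hφ0
    · exact ne_zero_of_natDegree_gt (n := 0) (by rw [hdeg]; omega)
  rw [degree_eq_natDegree hne, hdeg]

theorem eq_of_sum_range_C_mul_eq (hφ : LinearIndependent R φ) {N : ℕ}
    {a b : ℕ → R} (h : ∑ i ∈ range N, C (a i) * φ i = ∑ i ∈ range N, C (b i) * φ i)
    {i : ℕ} (hi : i < N) : a i = b i := by
  have hsub : ∑ i ∈ range N, (a - b) i • φ i = 0 := by
    simp only [Pi.sub_apply, sub_smul, sum_sub_distrib, ← C_mul', h, sub_self]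
  exact sub_eq_zero.mp (linearIndependent_iff'.mp hφ _ _ hsub i (mem_range.mpr hi))

-- Coefficients are indexed by `ℤ` so that at `i = 0` the term `a (i - 1)` is `a (-1) = 0`,
-- not `a 0` as truncated subtraction on `ℕ` would give.
theorem X_mul_sum_range_eq_of_recurrence {α β γ : ℕ → R}
    (hrec : ∀ j, X * φ j = C (α j) * φ (j + 1) + C (β j) * φ j + C (γ j) * φ (j - 1))
    (hγ0 : γ 0 = 0) {a : ℤ → R} {N : ℕ} (hneg : a (-1) = 0) (hhigh : ∀ i : ℤ, N ≤ i → a i = 0) :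
    X * ∑ i ∈ range (N + 1), C (a i) * φ i =
      ∑ i ∈ range (N + 1),
        C (α (i - 1) * a ((i : ℤ) - 1) + β i * a i + γ (i + 1) * a ((i : ℤ) + 1)) * φ i := by
  have hN : a N = 0 := hhigh N le_rfl
  have hN1 : a ((N : ℤ) + 1) = 0 := hhigh _ (by omega)
  have raise : ∑ i ∈ range (N + 1), C (α i * a i) * φ (i + 1) =
      ∑ i ∈ range (N + 1), C (α (i - 1) * a ((i : ℤ) - 1)) * φ i := by
    rw [sum_range_succ, sum_range_succ']
    simp [hN, hneg]
  have lower : ∑ i ∈ range (N + 1), C (γ i * a i) * φ (i - 1) =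
      ∑ i ∈ range (N + 1), C (γ (i + 1) * a ((i : ℤ) + 1)) * φ i := by
    rw [sum_range_succ', sum_range_succ]
    simp [hN1, hγ0]
  calc X * ∑ i ∈ range (N + 1), C (a i) * φ i
      = ∑ i ∈ range (N + 1), (C (α i * a i) * φ (i + 1) + C (β i * a i) * φ i
          + C (γ i * a i) * φ (i - 1)) := by
        rw [mul_sum]
        refine sum_congr rfl fun i _ => ?_
        simp only [map_mul]
        linear_combination C (a i) * hrec i
    _ = _ := by
        simp only [sum_add_distrib, raise, lower, map_add, add_mul]

theorem linearization_coeff_recursion [IsDomain R] {α β γ : ℕ → R}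
    (hdeg : ∀ j, (φ j).natDegree = j) (hφ0 : φ 0 ≠ 0)
    (hrec : ∀ j, X * φ j = C (α j) * φ (j + 1) + C (β j) * φ j + C (γ j) * φ (j - 1))
    (hγ0 : γ 0 = 0) {c : ℕ → ℕ → ℤ → R}
    (hcdef : ∀ j k, φ j * φ k = ∑ i ∈ range (j + k + 1), C (c j k i) * φ i)
    (hcneg : ∀ j k, c j k (-1) = 0) (hchigh : ∀ (j k : ℕ) (i : ℤ), (j : ℤ) + k < i → c j k i = 0)
    (m k i : ℕ) :
    α (m + 1) * c (m + 2) k i =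
      α (i - 1) * c (m + 1) k ((i : ℤ) - 1) + (β i - β (m + 1)) * c (m + 1) k i +
        γ (i + 1) * c (m + 1) k ((i : ℤ) + 1) - γ (m + 1) * c m k i := by
  have hexpand : ∀ j M, j + k + 1 ≤ M → φ j * φ k = ∑ i ∈ range M, C (c j k i) * φ i := by
    refine fun j M hM => (hcdef j k).trans (sum_subset (range_mono hM) fun i _ hi => ?_)
    rw [hchigh j k i (by simp only [mem_range] at hi; omega), map_zero, zero_mul]
  -- `N` is taken large enough that `i` lies in the range of summation.
  set N := m + k + 2 + i
  have hX := X_mul_sum_range_eq_of_recurrence hrec hγ0 (hcneg (m + 1) k) (N := N)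
    fun i hi => hchigh (m + 1) k i (by omega)
  have hr : C (α (m + 1)) * φ (m + 2) =
      X * φ (m + 1) - C (β (m + 1)) * φ (m + 1) - C (γ (m + 1)) * φ m := by
    rw [hrec (m + 1), Nat.add_sub_cancel]
    ring
  have hsum : ∑ i ∈ range (N + 1), C (α (m + 1) * c (m + 2) k i) * φ i =
      ∑ i ∈ range (N + 1), C (α (i - 1) * c (m + 1) k ((i : ℤ) - 1) +
        (β i - β (m + 1)) * c (m + 1) k i + γ (i + 1) * c (m + 1) k ((i : ℤ) + 1) -
          γ (m + 1) * c m k i) * φ i := by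
    calc _ = C (α (m + 1)) * φ (m + 2) * φ k := by
          simp only [mul_assoc, hexpand (m + 2) (N + 1) (by omega), mul_sum, map_mul]
      _ = X * (φ (m + 1) * φ k) - C (β (m + 1)) * (φ (m + 1) * φ k)
            - C (γ (m + 1)) * (φ m * φ k) := by rw [hr]; ring
      _ = _ := by
          rw [hexpand (m + 1) (N + 1) (by omega), hexpand m (N + 1) (by omega), hX, mul_sum,
            mul_sum, ← sum_sub_distrib, ← sum_sub_distrib]
          refine sum_congr rfl fun i _ => ?_
          simp only [map_sub, map_add, map_mul]
          ring
  exact eq_of_sum_range_C_mul_eq (linearIndependent_of_natDegree_eq hdeg hφ0) hsum (by omega)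

end Polynomial

theorem degree_graded_linearization_recursion (φ : ℕ → Polynomial ℝ) (α β γ : ℕ → ℝ)
    (hdeg : ∀ j, (φ j).natDegree = j) (hφ0 : φ 0 = 1)
    (hα : ∀ j, α j ≠ 0) (hγ0 : γ 0 = 0)
    (hrec : ∀ j, X * φ j = C (α j) * φ (j + 1) + C (β j) * φ j + C (γ j) * φ (j - 1))
    (c : ℕ → ℕ → ℤ → ℝ)
    (hcdef : ∀ j k, φ j * φ k = ∑ i ∈ Finset.range (j + k + 1), C (c j k (i : ℤ)) * φ i)
    (hcneg : ∀ (j k : ℕ) (i : ℤ), i < 0 → c j k i = 0)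
    (hchigh : ∀ (j k : ℕ) (i : ℤ), (j : ℤ) + k < i → c j k i = 0) :
    ∀ (j k i : ℕ), 2 ≤ j →
      c j k (i : ℤ) = (1 / α (j - 1)) *
        (α (i - 1) * c (j - 1) k ((i : ℤ) - 1) + (β i - β (j - 1)) * c (j - 1) k (i : ℤ) +
          γ (i + 1) * c (j - 1) k ((i : ℤ) + 1) - γ (j - 1) * c (j - 2) k (i : ℤ)) := by
  intro j k i hj
  obtain ⟨m, rfl⟩ : ∃ m, j = m + 2 := ⟨j - 2, by omega⟩
  rw [show m + 2 - 1 = m + 1 by omega, show m + 2 - 2 = m by omega, one_div,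
    eq_inv_mul_iff_mul_eq₀ (hα (m + 1))]
  exact linearization_coeff_recursion hdeg (by rw [hφ0]; exact one_ne_zero) hrec hγ0 hcdef
    (fun j k => hcneg j k (-1) (by norm_num)) hchigh m k i
end

section
/- Let T_{n,n+1} be the (n+1)×(n+2) matrix with T[i,i] = (n+1-i)/(n+1), T[i,i+1] = (i+1)/(n+1) (0-indexed, 0 ≤ i ≤ n) and zeros elsewhere. Then the product T_{n,n+1} T_{n+1,n+2} ... T_{m-1,m} equals the matrix with (i,j)-entry C(n,i) C(m-n, j-i) / C(m,j) for 0 ≤ i ≤ n, 0 ≤ j ≤ m (with out-of-range binomials equal to 0). -/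
/-- One-step Bernstein degree-elevation matrix `T_{p,p+1}`. -/
noncomputable def elevT (p : ℕ) : Matrix (Fin (p + 1)) (Fin (p + 2)) ℝ :=
  Matrix.of fun i j =>
    if (j : ℕ) = (i : ℕ) then ((p : ℝ) + 1 - (i : ℕ)) / ((p : ℝ) + 1)
    else if (j : ℕ) = (i : ℕ) + 1 then ((i : ℕ) + 1 : ℝ) / ((p : ℝ) + 1)
    else 0

/-- The product `T_{n,n+1} T_{n+1,n+2} ⋯ T_{n+k-1,n+k}`. -/
noncomputable def liftT (n : ℕ) : (k : ℕ) → Matrix (Fin (n + 1)) (Fin (n + k + 1)) ℝ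
  | 0 => 1
  | k + 1 => liftT n k * elevT (n + k)

/-!
Induction on `k`, the case `k = 0` being the identity matrix. With `N = n + k`,
right multiplication by `T_{N,N+1}` replaces column `j` by
`((N + 1 - j) · col j + j · col (j - 1)) / (N + 1)`.
Since `C(N+1, j) (N + 1 - j) = (N + 1) C(N, j)` and `C(N+1, j) j = (N + 1) C(N, j - 1)`,
clearing the denominators `C(N, j)` leaves Pascal's rule
`C(k, j - i) + C(k, j - i - 1) = C(k + 1, j - i)`.
-/

/-- The summand `C(n, i) C(k, j - i)` of Vandermonde's identity, with `C(k, j - i) = 0` for `j < i`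
(which truncated subtraction would get wrong). -/
def vandermondeTerm (n k i j : ℕ) : ℕ := if i ≤ j then n.choose i * k.choose (j - i) else 0

theorem vandermondeTerm_eq_zero_of_lt {n k i j : ℕ} (hj : n + k < j) :
    vandermondeTerm n k i j = 0 := by
  unfold vandermondeTerm
  split_ifs
  · rcases le_or_gt i n with hi | hi
    · rw [Nat.choose_eq_zero_of_lt (by omega : k < j - i), mul_zero]
    · rw [Nat.choose_eq_zero_of_lt hi, zero_mul]
  · rfl

theorem vandermondeTerm_succ_succ (n k i j : ℕ) :
    vandermondeTerm n (k + 1) i (j + 1)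
      = vandermondeTerm n k i (j + 1) + vandermondeTerm n k i j := by
  unfold vandermondeTerm
  rcases lt_trichotomy i (j + 1) with h | rfl | h
  · rw [if_pos h.le, if_pos h.le, if_pos (by omega), show j + 1 - i = j - i + 1 by omega,
      Nat.choose_succ_succ', mul_add, add_comm]
  · simp
  · rw [if_neg (by omega), if_neg (by omega), if_neg (by omega)]

/-- The hypergeometric probability `C(n, i) C(k, j - i) / C(n + k, j)`; for `j > n + k` both the
numerator and (by `x / 0 = 0`) the value are `0`. -/
noncomputable def hypergeomEntry (n k i j : ℕ) : ℝ := vandermondeTerm n k i j / (n + k).choose j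

theorem choose_mul_hypergeomEntry (n k i j : ℕ) :
    ((n + k).choose j : ℝ) * hypergeomEntry n k i j = vandermondeTerm n k i j := by
  rcases le_or_gt j (n + k) with hj | hj
  · exact mul_div_cancel₀ _ (Nat.cast_ne_zero.mpr (Nat.choose_pos hj).ne')
  · simp [hypergeomEntry, vandermondeTerm_eq_zero_of_lt hj]

theorem hypergeomEntry_succ (n k i j : ℕ) (hj : j ≤ n + k + 1) :
    ((((n + k : ℕ) : ℝ) + 1 - j) * hypergeomEntry n k i j + j * hypergeomEntry n k i (j - 1))
      / (((n + k : ℕ) : ℝ) + 1) = hypergeomEntry n (k + 1) i j := by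
  cases j with
  | zero =>
    have hN : ((n + k : ℕ) : ℝ) + 1 ≠ 0 := by positivity
    rw [Nat.cast_zero, sub_zero, zero_mul, add_zero, mul_div_cancel_left₀ _ hN]
    simp [hypergeomEntry, vandermondeTerm]
  | succ j =>
    set N := n + k
    have hpascal : (vandermondeTerm n (k + 1) i (j + 1) : ℝ)
        = vandermondeTerm n k i (j + 1) + vandermondeTerm n k i j := by
      exact_mod_cast vandermondeTerm_succ_succ n k i j
    have hchoose : ((N + 1).choose (j + 1) : ℝ) * ((N : ℝ) + 1 - (j + 1 : ℕ))
        = (N + 1) * N.choose (j + 1) := by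
      have h := congrArg (Nat.cast : ℕ → ℝ) (Nat.choose_mul_succ_eq N (j + 1))
      push_cast [Nat.cast_sub (by omega : j ≤ N)] at h ⊢
      linear_combination -h
    have hchoose' : ((N + 1).choose (j + 1) : ℝ) * (j + 1 : ℕ) = (N + 1) * N.choose j := by
      have h := congrArg (Nat.cast : ℕ → ℝ) (Nat.add_one_mul_choose_eq N j)
      push_cast at h ⊢
      linear_combination -h
    have hC : ((N + 1).choose (j + 1) : ℝ) ≠ 0 := Nat.cast_ne_zero.mpr (Nat.choose_pos hj).ne'
    rw [add_tsub_cancel_right, eq_comm, hypergeomEntry, show n + (k + 1) = N + 1 by omega,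
      div_eq_div_iff hC (by positivity)]
    linear_combination (↑N + 1) * hpascal - hypergeomEntry n k i (j + 1) * hchoose
      - hypergeomEntry n k i j * hchoose' - (↑N + 1) * choose_mul_hypergeomEntry n k i (j + 1)
      - (↑N + 1) * choose_mul_hypergeomEntry n k i j

theorem elevT_apply (p : ℕ) (l : Fin (p + 1)) (j : Fin (p + 2)) :
    elevT p l j = (((p : ℝ) + 1 - j) * (if (j : ℕ) = l then 1 else 0)
      + (j : ℝ) * (if (j : ℕ) = l + 1 then 1 else 0)) / ((p : ℝ) + 1) := by
  simp only [elevT, Matrix.of_apply]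
  by_cases h₁ : (j : ℕ) = l
  · simp [h₁]
  · by_cases h₂ : (j : ℕ) = l + 1
    · simp [h₂]
    · simp [h₁, h₂]

/-- The `j = p + 1` term needs no `g (p + 1)`: its weight `p + 1 - j` vanishes. -/
theorem sum_mul_elevT (p : ℕ) (g : ℕ → ℝ) (j : Fin (p + 2)) :
    ∑ l : Fin (p + 1), g l * elevT p l j
      = (((p : ℝ) + 1 - j) * g j + (j : ℝ) * g (j - 1)) / ((p : ℝ) + 1) := by
  simp only [elevT_apply, mul_div_assoc', ← Finset.sum_div, mul_add, Finset.sum_add_distrib,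
    mul_ite, mul_one, mul_zero]
  congr 1
  obtain ⟨j, hj⟩ := j
  rw [Fin.sum_univ_eq_sum_range (fun l => if j = l then g l * _ else 0),
    Fin.sum_univ_eq_sum_range (fun l => if j = l + 1 then g l * _ else 0), Finset.sum_ite_eq]
  have hdiag : (if j ∈ Finset.range (p + 1) then g j * ((p : ℝ) + 1 - j) else 0)
      = ((p : ℝ) + 1 - j) * g j := by
    split_ifs with h
    · ring
    · rw [show j = p + 1 by simp at h; omega]
      push_cast
      ring
  rw [hdiag]
  cases j with
  | zero => simp
  | succ j =>
    simp only [add_left_inj, Finset.sum_ite_eq, Finset.mem_range, if_pos (by omega : j < p + 1),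
      add_tsub_cancel_right]
    ring

theorem liftT_apply (n k : ℕ) (i : Fin (n + 1)) (j : Fin (n + k + 1)) :
    liftT n k i j = hypergeomEntry n k i j := by
  induction k with
  | zero =>
    rw [liftT, Matrix.one_apply]
    by_cases h : i = j
    · subst h
      simp [hypergeomEntry, vandermondeTerm, (Nat.choose_pos (Nat.lt_succ_iff.mp i.isLt)).ne']
    · have hij : (i : ℕ) ≠ j := fun e => h (Fin.ext e)
      rw [if_neg h, hypergeomEntry, vandermondeTerm, eq_comm, div_eq_zero_iff]
      left
      split_ifs
      · simp [Nat.choose_eq_zero_of_lt (by omega : 0 < (j : ℕ) - i)]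
      · exact Nat.cast_zero
  | succ k ih =>
    rw [liftT, Matrix.mul_apply]
    simp_rw [ih]
    exact (sum_mul_elevT (n + k) (hypergeomEntry n k i) j).trans
      (hypergeomEntry_succ n k i j (Nat.lt_succ_iff.mp j.isLt))

theorem bernstein_lifting_matrix_product_general (n k : ℕ) (i : Fin (n + 1))
    (j : Fin (n + k + 1)) :
    liftT n k i j =
      if (i : ℕ) ≤ (j : ℕ) then
        (n.choose i : ℝ) * (k.choose ((j : ℕ) - (i : ℕ)) : ℝ) / ((n + k).choose j : ℝ)
      else 0 := by
  rw [liftT_apply, hypergeomEntry, vandermondeTerm]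
  split_ifs <;> simp

theorem bernstein_lifting_matrix_product (n k : ℕ) (hk : 1 ≤ k) (i : Fin (n + 1))
    (j : Fin (n + k + 1)) :
    liftT n k i j =
      if (i : ℕ) ≤ (j : ℕ) then
        (n.choose i : ℝ) * (k.choose ((j : ℕ) - (i : ℕ)) : ℝ) / ((n + k).choose j : ℝ)
      else 0 :=
  bernstein_lifting_matrix_product_general n k i j
end
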